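/- If w is a palindrome over {0,1,2}, then σ(w)0 is a palindrome, where σ is the Tribonacci morphism σ(0)=01, σ(1)=02, σ(2)=0. -/
import Mathlib

/-- The Tribonacci morphism σ(0)=01, σ(1)=02, σ(2)=0. -/
def tmor (b : ℕ) : List ℕ := if b = 0 then [0, 1] else if b = 1 then [0, 2] else [0]

lemma tmor_pal (a : ℕ) : [0] ++ (tmor a).reverse = tmor a ++ [0] := by
  unfold tmor; split <;> [skip; split] <;> simp

lemma key (w : List ℕ) :
    (w.flatMap tmor ++ [0]).reverse = w.reverse.flatMap tmor ++ [0] := by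
  induction w with
  | nil => simp
  | cons a t ih =>
      calc (((a :: t).flatMap tmor) ++ [0]).reverse
          = (t.flatMap tmor ++ [0]).reverse ++ (tmor a).reverse := by
            simp [List.reverse_append]
        _ = t.reverse.flatMap tmor ++ ([0] ++ (tmor a).reverse) := by
            rw [ih, List.append_assoc]
        _ = t.reverse.flatMap tmor ++ (tmor a ++ [0]) := by rw [tmor_pal]
        _ = (a :: t).reverse.flatMap tmor ++ [0] := by simp

/-- if w is a palindrome over {0,1,2}, then σ(w)0 is a
palindrome. -/
theorem trib_palindrome (w : List ℕ) (hw : ∀ a ∈ w, a < 3)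
    (hpal : w.reverse = w) :
    (w.flatMap tmor ++ [0]).reverse = w.flatMap tmor ++ [0] := by
  rw [key, hpal]
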